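/- Let A, B be bounded operators on a complex Hilbert space H and T = [[A, B], [B, A]] on H ⊕ H. Then ber(T) ≤ (1/2)·(ber(|A| + |A*|) + ber(|B| + |B*|)), where ber is the supremum of |⟨· k, k⟩| over normalized reproducing kernels of the relevant spaces. -/

import Mathlib

/-!
Everything rests on the mixed Schwarz inequality `‖⟪T x, y⟫‖² ≤ ⟪|T| x, x⟫ ⟪|T*| y, y⟫`.
Lacking a polar decomposition, we regularize: for `δ > 0` let `P = (|T| + δ)^(1/2)` and
`Q = P⁻¹` in the functional calculus of `T*T`, so that `T = (T Q) P`. Cauchy–Schwarz bounds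
`‖⟪T x, y⟫‖²` by `‖P x‖² ‖(T Q)* y‖² = ⟪(|T| + δ) x, x⟫ ⟪T (|T| + δ)⁻¹ T* y, y⟫`, and the
intertwining `T f(T*T) = f(TT*) T` turns the second factor into `⟪g(TT*) y, y⟫` with
`g t = t / (√t + δ) ≤ √t`. Let `δ → 0`.

By AM–GM each of the four terms of the Berezin symbol of `[[A, B], [B, A]]` at `(u, v)` is then
at most half a sum of values of `|A| + |A*|` or `|B| + |B*|` at `u` and `v`, which are bounded by
`‖u‖²` and `‖v‖²` times the corresponding Berezin numbers, and `‖u‖² + ‖v‖² ≤ 1`.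
-/

open scoped InnerProductSpace
open ContinuousLinearMap Complex

variable {H : Type*} [NormedAddCommGroup H] [InnerProductSpace ℂ H] [CompleteSpace H]

/-- The absolute value `|T| = (T*T)^(1/2)` of an operator. -/
noncomputable def oabs (T : H →L[ℂ] H) : H →L[ℂ] H :=
  cfc Real.sqrt (ContinuousLinearMap.adjoint T * T)

theorem SemiconjBy.aeval {R 𝒜 : Type*} [CommSemiring R] [Semiring 𝒜] [Algebra R 𝒜] {x a b : 𝒜}
    (h : SemiconjBy x a b) (q : Polynomial R) :
    SemiconjBy x (Polynomial.aeval a q) (Polynomial.aeval b q) := by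
  induction q using Polynomial.induction_on' with
  | add p q hp hq => simpa only [map_add] using hp.add_right hq
  | monomial n r => simpa only [Polynomial.aeval_monomial, Algebra.algebraMap_eq_smul_one,
      smul_mul_assoc, one_mul] using (h.pow_right n).smul_right r

/-- Polynomials intertwine by `SemiconjBy.aeval`; pass to the limit by Weierstrass approximation
on an interval containing both spectra. -/
theorem SemiconjBy.cfc_real {𝒜 : Type*} [CStarAlgebra 𝒜] {x a b : 𝒜} (h : SemiconjBy x a b)
    (ha : IsSelfAdjoint a) (hb : IsSelfAdjoint b) {f : ℝ → ℝ} (hf : Continuous f) :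
    SemiconjBy x (cfc f a) (cfc f b) := by
  obtain ⟨R, hR⟩ := ((spectrum.isBounded (𝕜 := ℝ) a).union
    (spectrum.isBounded (𝕜 := ℝ) b)).subset_closedBall 0
  rw [Real.closedBall_eq_Icc, Set.union_subset_iff] at hR
  have hclose : ∀ δ > 0, ‖x * cfc f a - cfc f b * x‖ ≤ 2 * ‖x‖ * δ := by
    intro δ hδ
    obtain ⟨q, hq⟩ := exists_polynomial_near_of_continuousOn (0 - R) (0 + R) f hf.continuousOn δ hδ
    have hnear : ∀ c : 𝒜, IsSelfAdjoint c → spectrum ℝ c ⊆ Set.Icc (0 - R) (0 + R) →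
        ‖cfc f c - Polynomial.aeval c q‖ ≤ δ := fun c hc hσ => by
      rw [← cfc_polynomial q c hc, ← cfc_sub f _ c]
      exact norm_cfc_le hδ.le fun t ht => by
        rw [Real.norm_eq_abs, abs_sub_comm]; exact (hq t (hσ ht)).le
    have hsplit : x * cfc f a - cfc f b * x =
        x * (cfc f a - Polynomial.aeval a q) - (cfc f b - Polynomial.aeval b q) * x := by
      rw [mul_sub, sub_mul, (h.aeval q).eq]; abel
    calc ‖x * cfc f a - cfc f b * x‖
        ≤ ‖x‖ * ‖cfc f a - Polynomial.aeval a q‖ + ‖cfc f b - Polynomial.aeval b q‖ * ‖x‖ := by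
          rw [hsplit]
          exact (norm_sub_le _ _).trans (add_le_add (norm_mul_le _ _) (norm_mul_le _ _))
      _ ≤ ‖x‖ * δ + δ * ‖x‖ := by
          gcongr
          exacts [hnear a ha hR.1, hnear b hb hR.2]
      _ = 2 * ‖x‖ * δ := by ring
  have hlim : Filter.Tendsto (fun δ : ℝ => 2 * ‖x‖ * δ) (nhdsWithin 0 (Set.Ioi 0)) (nhds 0) := by
    simpa using ((continuous_const_mul (2 * ‖x‖)).tendsto 0).mono_left nhdsWithin_le_nhds
  have := ge_of_tendsto hlim (eventually_nhdsWithin_of_forall hclose)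
  exact sub_eq_zero.mp (norm_le_zero_iff.mp this)

theorem re_inner_apply_le_of_le {𝕜 E : Type*} [RCLike 𝕜] [NormedAddCommGroup E]
    [InnerProductSpace 𝕜 E] {W V : E →L[𝕜] E} (h : W ≤ V) (x : E) :
    RCLike.re ⟪W x, x⟫_𝕜 ≤ RCLike.re ⟪V x, x⟫_𝕜 := by
  have := ((ContinuousLinearMap.le_def W V).mp h).re_inner_nonneg_left x
  rwa [sub_apply, inner_sub_left, map_sub, sub_nonneg] at this

theorem norm_inner_sq_le_of_eq_mul {T W P : H →L[ℂ] H} (h : T = W * P) (x y : H) :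
    ‖⟪T x, y⟫_ℂ‖ ^ 2 ≤
      RCLike.re ⟪(adjoint P * P) x, x⟫_ℂ * RCLike.re ⟪(W * adjoint W) y, y⟫_ℂ := by
  have hW := apply_norm_sq_eq_inner_adjoint_left (adjoint W) y
  rw [adjoint_adjoint] at hW
  rw [mul_def, mul_def, ← apply_norm_sq_eq_inner_adjoint_left, ← hW, ← mul_pow, h,
    mul_apply_eq_comp, ← adjoint_inner_right]
  exact pow_le_pow_left₀ (norm_nonneg _) (norm_inner_le_norm _ _) 2

theorem mul_cfc_adjoint_mul_self (T : H →L[ℂ] H) {f : ℝ → ℝ} (hf : Continuous f) :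
    T * cfc f (adjoint T * T) = cfc f (T * adjoint T) * T :=
  (SemiconjBy.cfc_real (by simp only [SemiconjBy, mul_assoc]) (.star_mul_self T)
    (.mul_star_self T) hf).eq

theorem norm_inner_sq_le_cfc (T : H →L[ℂ] H) {g : ℝ → ℝ} (hg : Continuous g)
    (hg_pos : ∀ t, 0 < g t) (x y : H) :
    ‖⟪T x, y⟫_ℂ‖ ^ 2 ≤ RCLike.re ⟪cfc g (adjoint T * T) x, x⟫_ℂ *
      RCLike.re ⟪cfc (fun t => t / g t) (T * adjoint T) y, y⟫_ℂ := by
  set S := adjoint T * T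
  have hS : IsSelfAdjoint S := .star_mul_self T
  have hsqrt_pos : ∀ t, 0 < √(g t) := fun t => Real.sqrt_pos.mpr (hg_pos t)
  have hsqrt : Continuous fun t => √(g t) := hg.sqrt
  have hsqrt_inv : Continuous fun t => (√(g t))⁻¹ := hsqrt.inv₀ fun t => (hsqrt_pos t).ne'
  set P := cfc (fun t => √(g t)) S
  set Q := cfc (fun t => (√(g t))⁻¹) S
  have hQP : Q * P = 1 := by
    rw [← cfc_mul _ _ S hsqrt_inv.continuousOn hsqrt.continuousOn, ← cfc_one ℝ S]
    exact cfc_congr fun t _ => inv_mul_cancel₀ (hsqrt_pos t).ne'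
  have hPP : adjoint P * P = cfc g S := by
    rw [← star_eq_adjoint, (cfc_predicate _ S : IsSelfAdjoint P).star_eq,
      ← cfc_mul _ _ S hsqrt.continuousOn hsqrt.continuousOn]
    exact cfc_congr fun t _ => Real.mul_self_sqrt (hg_pos t).le
  have hQQ : Q * adjoint Q = cfc (fun t => (g t)⁻¹) S := by
    rw [← star_eq_adjoint, (cfc_predicate _ S : IsSelfAdjoint Q).star_eq,
      ← cfc_mul _ _ S hsqrt_inv.continuousOn hsqrt_inv.continuousOn]
    refine cfc_congr fun t _ => ?_
    rw [← mul_inv, Real.mul_self_sqrt (hg_pos t).le]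
  have hg_inv : Continuous fun t => (g t)⁻¹ := hg.inv₀ fun t => (hg_pos t).ne'
  have hTQ : T * Q * adjoint (T * Q) = cfc (fun t => t / g t) (T * adjoint T) := by
    have hS' : IsSelfAdjoint (T * adjoint T) := .mul_star_self T
    calc T * Q * adjoint (T * Q) = T * (Q * adjoint Q) * adjoint T := by
          rw [← star_eq_adjoint, star_mul, star_eq_adjoint, star_eq_adjoint]
          simp only [mul_assoc]
      _ = cfc (fun t => (g t)⁻¹) (T * adjoint T) * cfc id (T * adjoint T) := by
          rw [hQQ, mul_cfc_adjoint_mul_self T hg_inv, cfc_id ℝ _ hS', mul_assoc]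
      _ = cfc (fun t => t / g t) (T * adjoint T) := by
          rw [← cfc_mul _ _ _ hg_inv.continuousOn continuous_id.continuousOn]
          exact cfc_congr fun t _ => by rw [div_eq_inv_mul, id]
  have := norm_inner_sq_le_of_eq_mul (P := P) (W := T * Q) (by rw [mul_assoc, hQP, mul_one]) x y
  rwa [hPP, hTQ] at this

theorem re_inner_oabs_apply_nonneg (T : H →L[ℂ] H) (x : H) :
    0 ≤ RCLike.re ⟪oabs T x, x⟫_ℂ :=
  ((nonneg_iff_isPositive _).mp (cfc_nonneg fun t _ => Real.sqrt_nonneg t)).re_inner_nonneg_left x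

theorem norm_inner_sq_le_oabs_mul_oabs_of_pos (T : H →L[ℂ] H) {δ : ℝ} (hδ : 0 < δ) (x y : H) :
    ‖⟪T x, y⟫_ℂ‖ ^ 2 ≤ (RCLike.re ⟪oabs T x, x⟫_ℂ + δ * ‖x‖ ^ 2) *
      RCLike.re ⟪oabs (adjoint T) y, y⟫_ℂ := by
  have hg : Continuous fun t => √t + δ := by fun_prop
  refine (norm_inner_sq_le_cfc T hg (fun t => by positivity) x y).trans ?_
  have hleft : cfc (fun t => √t + δ) (adjoint T * T) = oabs T + algebraMap ℝ _ δ :=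
    cfc_add_const δ Real.sqrt _ (ha := .star_mul_self T)
  have hright : cfc (fun t => t / (√t + δ)) (T * adjoint T) ≤ oabs (adjoint T) := by
    rw [oabs, adjoint_adjoint]
    refine cfc_mono (fun t ht => ?_) (by fun_prop (disch := intro t _; positivity))
    have ht0 : 0 ≤ t := spectrum_nonneg_of_nonneg (mul_star_self_nonneg T) ht
    rw [div_le_iff₀ (by positivity)]
    nlinarith [Real.mul_self_sqrt ht0, Real.sqrt_nonneg t]
  rw [hleft, add_apply, inner_add_left, map_add, ContinuousLinearMap.algebraMap_apply,
    RCLike.real_smul_eq_coe_smul (K := ℂ), inner_smul_real_left, RCLike.smul_re,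
    inner_self_eq_norm_sq]
  exact mul_le_mul_of_nonneg_left (re_inner_apply_le_of_le hright y)
    (by have := re_inner_oabs_apply_nonneg T x; positivity)

theorem norm_inner_sq_le_oabs_mul_oabs (T : H →L[ℂ] H) (x y : H) :
    ‖⟪T x, y⟫_ℂ‖ ^ 2 ≤ RCLike.re ⟪oabs T x, x⟫_ℂ * RCLike.re ⟪oabs (adjoint T) y, y⟫_ℂ := by
  set a := RCLike.re ⟪oabs T x, x⟫_ℂ
  set b := RCLike.re ⟪oabs (adjoint T) y, y⟫_ℂ
  have hlim : Filter.Tendsto (fun δ : ℝ => (a + δ * ‖x‖ ^ 2) * b) (nhdsWithin 0 (Set.Ioi 0))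
      (nhds (a * b)) := by
    refine tendsto_nhdsWithin_of_tendsto_nhds ?_
    simpa using ((by fun_prop : Continuous fun δ : ℝ => (a + δ * ‖x‖ ^ 2) * b).tendsto 0)
  exact ge_of_tendsto hlim (eventually_nhdsWithin_of_forall fun δ hδ =>
    norm_inner_sq_le_oabs_mul_oabs_of_pos T hδ x y)

theorem norm_inner_le_oabs_add_oabs_div_two (T : H →L[ℂ] H) (x y : H) :
    ‖⟪T x, y⟫_ℂ‖ ≤ (RCLike.re ⟪oabs T x, x⟫_ℂ + RCLike.re ⟪oabs (adjoint T) y, y⟫_ℂ) / 2 := by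
  have := norm_inner_sq_le_oabs_mul_oabs T x y
  have := re_inner_oabs_apply_nonneg T x
  have := re_inner_oabs_apply_nonneg (adjoint T) y
  nlinarith [norm_nonneg ⟪T x, y⟫_ℂ, sq_nonneg (RCLike.re ⟪oabs T x, x⟫_ℂ -
    RCLike.re ⟪oabs (adjoint T) y, y⟫_ℂ)]

theorem norm_inner_apply_self_le (A : H →L[ℂ] H) (u : H) :
    ‖⟪A u, u⟫_ℂ‖ ≤ RCLike.re ⟪(oabs A + oabs (adjoint A)) u, u⟫_ℂ / 2 := by
  simpa only [add_apply, inner_add_left, map_add] using norm_inner_le_oabs_add_oabs_div_two A u u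

theorem norm_inner_apply_add_norm_inner_apply_swap_le (B : H →L[ℂ] H) (u v : H) :
    ‖⟪B v, u⟫_ℂ‖ + ‖⟪B u, v⟫_ℂ‖ ≤ (RCLike.re ⟪(oabs B + oabs (adjoint B)) u, u⟫_ℂ +
      RCLike.re ⟪(oabs B + oabs (adjoint B)) v, v⟫_ℂ) / 2 := by
  have := add_le_add (norm_inner_le_oabs_add_oabs_div_two B v u)
    (norm_inner_le_oabs_add_oabs_div_two B u v)
  simp only [add_apply, inner_add_left, map_add]
  linarith

section Berezin

variable {E ι : Type*} [NormedAddCommGroup E] [InnerProductSpace ℂ E]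

noncomputable def berezinNumber (κ : ι → E) (M : E →L[ℂ] E) : ℝ :=
  ⨆ i, ‖⟪M (‖κ i‖⁻¹ • κ i), ‖κ i‖⁻¹ • κ i⟫_ℂ‖

theorem berezinNumber_nonneg (κ : ι → E) (M : E →L[ℂ] E) : 0 ≤ berezinNumber κ M :=
  Real.iSup_nonneg fun _ => norm_nonneg _

theorem norm_inner_apply_le_opNorm_of_norm_le_one (M : E →L[ℂ] E) {w : E} (hw : ‖w‖ ≤ 1) :
    ‖⟪M w, w⟫_ℂ‖ ≤ ‖M‖ :=
  calc ‖⟪M w, w⟫_ℂ‖ ≤ ‖M‖ * ‖w‖ * ‖w‖ :=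
        (norm_inner_le_norm _ _).trans (mul_le_mul_of_nonneg_right (M.le_opNorm w) (norm_nonneg w))
    _ ≤ ‖M‖ * 1 * 1 := by gcongr
    _ = ‖M‖ := by ring

theorem norm_inv_norm_smul_le_one (w : E) : ‖‖w‖⁻¹ • w‖ ≤ 1 := by
  rcases eq_or_ne w 0 with rfl | hw
  · simp
  · exact (norm_smul_inv_norm hw).le

theorem re_inner_apply_smul_le_berezinNumber (κ : ι → E) (M : E →L[ℂ] E) (r : ℝ) (i : ι) :
    RCLike.re ⟪M (r • κ i), r • κ i⟫_ℂ ≤ ‖r • κ i‖ ^ 2 * berezinNumber κ M := by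
  set w := ‖κ i‖⁻¹ • κ i
  have hw : r • κ i = (r * ‖κ i‖ : ℝ) • w := by
    rcases eq_or_ne (κ i) 0 with h | h
    · simp [w, h]
    · rw [smul_smul, mul_assoc, mul_inv_cancel₀ (norm_ne_zero_iff.mpr h), mul_one]
  have hbdd : BddAbove (Set.range fun j => ‖⟪M (‖κ j‖⁻¹ • κ j), ‖κ j‖⁻¹ • κ j⟫_ℂ‖) :=
    ⟨‖M‖, Set.forall_mem_range.mpr fun j =>
      norm_inner_apply_le_opNorm_of_norm_le_one M (norm_inv_norm_smul_le_one (κ j))⟩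
  have hsq : ‖r • κ i‖ ^ 2 = (r * ‖κ i‖) ^ 2 := by
    rw [norm_smul, Real.norm_eq_abs, mul_pow, mul_pow, sq_abs]
  rw [hsq, hw, RCLike.real_smul_eq_coe_smul (K := ℂ), map_smul, inner_smul_real_left,
    inner_smul_real_right, smul_smul, RCLike.smul_re, ← sq]
  exact mul_le_mul_of_nonneg_left ((RCLike.re_le_norm _).trans (le_ciSup hbdd i)) (sq_nonneg _)

theorem norm_sq_add_norm_sq_inv_sqrt_smul_le_one (w z : E) :
    ‖(√(‖w‖ ^ 2 + ‖z‖ ^ 2))⁻¹ • w‖ ^ 2 + ‖(√(‖w‖ ^ 2 + ‖z‖ ^ 2))⁻¹ • z‖ ^ 2 ≤ 1 := by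
  rw [norm_smul, norm_smul, mul_pow, mul_pow, ← mul_add, Real.norm_eq_abs, sq_abs, inv_pow,
    Real.sq_sqrt (by positivity)]
  exact inv_mul_le_one_of_le₀ le_rfl (by positivity)

end Berezin

/-- The supremum on the left is the Berezin number of `T = [[A, B], [B, A]]` on `H ⊕ H` over the
normalized kernels `(κ i, κ j)/‖(κ i, κ j)‖`, at which the Berezin symbol of `T` is
`⟪A u, u⟫ + ⟪B v, u⟫ + ⟪B u, v⟫ + ⟪A v, v⟫`. -/
theorem berezin_symmetric_block_general {ι : Type*} (κ : ι → H)
    (A B : H →L[ℂ] H) :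
    (⨆ p : ι × ι,
        ‖⟪A ((Real.sqrt (‖κ p.1‖ ^ 2 + ‖κ p.2‖ ^ 2))⁻¹ • κ p.1),
            (Real.sqrt (‖κ p.1‖ ^ 2 + ‖κ p.2‖ ^ 2))⁻¹ • κ p.1⟫_ℂ +
          ⟪B ((Real.sqrt (‖κ p.1‖ ^ 2 + ‖κ p.2‖ ^ 2))⁻¹ • κ p.2),
            (Real.sqrt (‖κ p.1‖ ^ 2 + ‖κ p.2‖ ^ 2))⁻¹ • κ p.1⟫_ℂ +
          ⟪B ((Real.sqrt (‖κ p.1‖ ^ 2 + ‖κ p.2‖ ^ 2))⁻¹ • κ p.1),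
            (Real.sqrt (‖κ p.1‖ ^ 2 + ‖κ p.2‖ ^ 2))⁻¹ • κ p.2⟫_ℂ +
          ⟪A ((Real.sqrt (‖κ p.1‖ ^ 2 + ‖κ p.2‖ ^ 2))⁻¹ • κ p.2),
            (Real.sqrt (‖κ p.1‖ ^ 2 + ‖κ p.2‖ ^ 2))⁻¹ • κ p.2⟫_ℂ‖) ≤
      (1 / 2) *
        ((⨆ i, ‖⟪(oabs A + oabs (ContinuousLinearMap.adjoint A)) (‖κ i‖⁻¹ • κ i),
            ‖κ i‖⁻¹ • κ i⟫_ℂ‖) +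
         ⨆ i, ‖⟪(oabs B + oabs (ContinuousLinearMap.adjoint B)) (‖κ i‖⁻¹ • κ i),
            ‖κ i‖⁻¹ • κ i⟫_ℂ‖) := by
  set MA := oabs A + oabs (adjoint A)
  set MB := oabs B + oabs (adjoint B)
  change _ ≤ 1 / 2 * (berezinNumber κ MA + berezinNumber κ MB)
  have hA := berezinNumber_nonneg κ MA
  have hB := berezinNumber_nonneg κ MB
  refine Real.iSup_le (fun ⟨i, j⟩ => ?_) (by positivity)
  set c := (√(‖κ i‖ ^ 2 + ‖κ j‖ ^ 2))⁻¹
  have hc : ‖c • κ i‖ ^ 2 + ‖c • κ j‖ ^ 2 ≤ 1 := norm_sq_add_norm_sq_inv_sqrt_smul_le_one _ _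
  calc ‖⟪A (c • κ i), c • κ i⟫_ℂ + ⟪B (c • κ j), c • κ i⟫_ℂ + ⟪B (c • κ i), c • κ j⟫_ℂ +
        ⟪A (c • κ j), c • κ j⟫_ℂ‖
      ≤ ‖⟪A (c • κ i), c • κ i⟫_ℂ‖ + ‖⟪A (c • κ j), c • κ j⟫_ℂ‖ +
          (‖⟪B (c • κ j), c • κ i⟫_ℂ‖ + ‖⟪B (c • κ i), c • κ j⟫_ℂ‖) :=
        norm_add₄_le.trans_eq (by ring)
    _ ≤ RCLike.re ⟪MA (c • κ i), c • κ i⟫_ℂ / 2 + RCLike.re ⟪MA (c • κ j), c • κ j⟫_ℂ / 2 +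
          (RCLike.re ⟪MB (c • κ i), c • κ i⟫_ℂ + RCLike.re ⟪MB (c • κ j), c • κ j⟫_ℂ) / 2 :=
        add_le_add (add_le_add (norm_inner_apply_self_le A _) (norm_inner_apply_self_le A _))
          (norm_inner_apply_add_norm_inner_apply_swap_le B _ _)
    _ ≤ (‖c • κ i‖ ^ 2 + ‖c • κ j‖ ^ 2) * (berezinNumber κ MA + berezinNumber κ MB) / 2 := by
        have := re_inner_apply_smul_le_berezinNumber κ MA c i
        have := re_inner_apply_smul_le_berezinNumber κ MA c j
        have := re_inner_apply_smul_le_berezinNumber κ MB c i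
        have := re_inner_apply_smul_le_berezinNumber κ MB c j
        linarith
    _ ≤ 1 / 2 * (berezinNumber κ MA + berezinNumber κ MB) := by nlinarith

/-- Berezin number bound for `T = [[A, B], [B, A]]` on `H ⊕ H` with respect to the
normalized reproducing kernels `(κ i, κ j)/‖(κ i, κ j)‖`: the Berezin symbol of `T` at such
a normalized kernel `(u, v)` is `⟪A u, u⟫ + ⟪B v, u⟫ + ⟪B u, v⟫ + ⟪A v, v⟫`, and the
bound is `(1/2)·(ber(|A| + |A*|) + ber(|B| + |B*|))` taken over the kernels of `H`. -/
theorem berezin_symmetric_block {ι : Type*} (κ : ι → H) (hκ : ∀ i, κ i ≠ 0)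
    (A B : H →L[ℂ] H) :
    (⨆ p : ι × ι,
        ‖⟪A ((Real.sqrt (‖κ p.1‖ ^ 2 + ‖κ p.2‖ ^ 2))⁻¹ • κ p.1),
            (Real.sqrt (‖κ p.1‖ ^ 2 + ‖κ p.2‖ ^ 2))⁻¹ • κ p.1⟫_ℂ +
          ⟪B ((Real.sqrt (‖κ p.1‖ ^ 2 + ‖κ p.2‖ ^ 2))⁻¹ • κ p.2),
            (Real.sqrt (‖κ p.1‖ ^ 2 + ‖κ p.2‖ ^ 2))⁻¹ • κ p.1⟫_ℂ +
          ⟪B ((Real.sqrt (‖κ p.1‖ ^ 2 + ‖κ p.2‖ ^ 2))⁻¹ • κ p.1),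
            (Real.sqrt (‖κ p.1‖ ^ 2 + ‖κ p.2‖ ^ 2))⁻¹ • κ p.2⟫_ℂ +
          ⟪A ((Real.sqrt (‖κ p.1‖ ^ 2 + ‖κ p.2‖ ^ 2))⁻¹ • κ p.2),
            (Real.sqrt (‖κ p.1‖ ^ 2 + ‖κ p.2‖ ^ 2))⁻¹ • κ p.2⟫_ℂ‖) ≤
      (1 / 2) *
        ((⨆ i, ‖⟪(oabs A + oabs (ContinuousLinearMap.adjoint A)) (‖κ i‖⁻¹ • κ i),
            ‖κ i‖⁻¹ • κ i⟫_ℂ‖) +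
         ⨆ i, ‖⟪(oabs B + oabs (ContinuousLinearMap.adjoint B)) (‖κ i‖⁻¹ • κ i),
            ‖κ i‖⁻¹ • κ i⟫_ℂ‖) :=
  berezin_symmetric_block_general κ A B
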